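/- arXiv:0802.1619 — 2 statements merged into one kernel-verified Lean document; each statement's English description precedes it below -/
import Mathlib

section
/- Let K be a complete discretely valued field of characteristic p with perfect residue field, and let L/K be a finite Galois extension with group G that is totally ramified of degree p^n. Let π_L be a uniformizer of L with minimal polynomial p(x) over K, set d = v_L(p'(π_L)). Then for every integer i with i ≢ −d − 1 (mod p^n) there exists ρ_i ∈ L with v_L(ρ_i) = i such that K[G]·ρ_i is a proper K-subspace of L (so ρ_i is not a normal basis generator). Hence the valuation criterion of the main theorem is tight. -/
/-- A normalized discrete valuation on a field `F` : an integer-valued function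
(its value at `0` is irrelevant), additive on products of nonzero elements,
satisfying the ultrametric inequality, and attaining the value `1`
(so `v (Fˣ) = ℤ`, i.e. it is normalized). -/
structure NormDiscVal (F : Type*) [Field F] where
  v : F → ℤ
  v_mul : ∀ x y : F, x ≠ 0 → y ≠ 0 → v (x * y) = v x + v y
  v_add : ∀ x y : F, x ≠ 0 → y ≠ 0 → x + y ≠ 0 → min (v x) (v y) ≤ v (x + y)
  exists_uniformizer : ∃ π : F, π ≠ 0 ∧ v π = 1

namespace NormDiscVal

variable {F : Type*} [Field F]

/-- `x` belongs to the fractional ideal `𝔓^j = {x | v x ≥ j}` (and `0` belongs to all). -/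
def memP (w : NormDiscVal F) (j : ℤ) (x : F) : Prop := x = 0 ∨ j ≤ w.v x

/-- `F` is complete with respect to the valuation `w` :
every Cauchy sequence (for the valuation) has a limit. -/
def IsComplete (w : NormDiscVal F) : Prop :=
  ∀ a : ℕ → F,
    (∀ N : ℤ, ∃ M : ℕ, ∀ m k : ℕ, M ≤ m → M ≤ k → w.memP N (a m - a k)) →
    ∃ l : F, ∀ N : ℤ, ∃ M : ℕ, ∀ m : ℕ, M ≤ m → w.memP N (a m - l)

/-- The residue field of `w` has characteristic `p` and is perfect :
`p` vanishes in the residue field and the Frobenius is surjective on it. -/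
def PerfectResidueCharP (w : NormDiscVal F) (p : ℕ) : Prop :=
  w.memP 1 (p : F) ∧
    ∀ x : F, w.memP 0 x → ∃ y : F, w.memP 0 y ∧ w.memP 1 (x - y ^ p)

variable (w : NormDiscVal F)

lemma v_one_eq : w.v 1 = 0 := by
  have := w.v_mul 1 1 one_ne_zero one_ne_zero
  rw [mul_one] at this; omega

lemma v_inv_eq {x : F} (hx : x ≠ 0) : w.v x⁻¹ = - w.v x := by
  have := w.v_mul x x⁻¹ hx (inv_ne_zero hx)
  rw [mul_inv_cancel₀ hx, w.v_one_eq] at this; omega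

lemma v_neg_eq {x : F} (hx : x ≠ 0) : w.v (-x) = w.v x := by
  have h1 : ((-1 : F)) * (-1) = 1 := by ring
  have h2 := w.v_mul (-1) (-1) (by norm_num) (by norm_num)
  rw [h1, w.v_one_eq] at h2
  have h3 := w.v_mul (-1) x (by norm_num) hx
  rw [neg_one_mul] at h3
  omega

lemma v_pow_eq {x : F} (hx : x ≠ 0) (k : ℕ) : w.v (x ^ k) = k * w.v x := by
  induction k with
  | zero => simpa using w.v_one_eq
  | succ m ih =>
      rw [pow_succ, w.v_mul _ _ (pow_ne_zero _ hx) hx, ih]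
      push_cast; ring

lemma v_zpow_eq {x : F} (hx : x ≠ 0) (m : ℤ) : w.v (x ^ m) = m * w.v x := by
  cases m with
  | ofNat k => rw [Int.ofNat_eq_coe, zpow_natCast, w.v_pow_eq hx]
  | negSucc k =>
      rw [zpow_negSucc, w.v_inv_eq (pow_ne_zero _ hx), w.v_pow_eq hx]
      simp [Int.negSucc_eq]; ring

lemma v_add_eq_left {x y : F} (hx : x ≠ 0) (hy : y ≠ 0) (hlt : w.v x < w.v y) :
    x + y ≠ 0 ∧ w.v (x + y) = w.v x := by
  have hne : x + y ≠ 0 := by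
    intro h
    have : y = -x := by linear_combination h
    rw [this, w.v_neg_eq hx] at hlt; omega
  refine ⟨hne, ?_⟩
  have h1 := w.v_add x y hx hy hne
  rw [min_eq_left hlt.le] at h1
  by_contra h2
  have h2' : w.v x < w.v (x + y) := lt_of_le_of_ne h1 (Ne.symm h2)
  have h3 := w.v_add (x + y) (-y) hne (neg_ne_zero.mpr hy) (by simpa using hx)
  rw [add_neg_cancel_right, w.v_neg_eq hy] at h3
  omega

lemma v_add_eq_min {x y : F} (hx : x ≠ 0) (hy : y ≠ 0) (hne : w.v x ≠ w.v y) :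
    x + y ≠ 0 ∧ w.v (x + y) = min (w.v x) (w.v y) := by
  rcases lt_or_gt_of_ne hne with h | h
  · have := w.v_add_eq_left hx hy h
    rw [min_eq_left h.le]; exact this
  · have := w.v_add_eq_left hy hx h
    rw [min_eq_right h.le, add_comm]; exact this

lemma v_sum {ι : Type*} (s : Finset ι) (f : ι → F)
    (h0 : ∀ i ∈ s, f i ≠ 0)
    (hinj : ∀ i ∈ s, ∀ j ∈ s, w.v (f i) = w.v (f j) → i = j)
    (hs : s.Nonempty) :
    (∑ i ∈ s, f i) ≠ 0 ∧ ∃ i ∈ s, w.v (∑ i ∈ s, f i) = w.v (f i) := by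
  classical
  induction s using Finset.cons_induction with
  | empty => simp at hs
  | cons a t ha IH =>
      rw [Finset.sum_cons]
      rcases t.eq_empty_or_nonempty with rfl | ht
      · simp only [Finset.sum_empty, add_zero]
        exact ⟨h0 a (by simp), a, by simp⟩
      · obtain ⟨hT0, i0, hi0, hvi0⟩ := IH
          (fun i hi => h0 i (Finset.mem_cons_of_mem hi))
          (fun i hi j hj hv => hinj i (Finset.mem_cons_of_mem hi) j (Finset.mem_cons_of_mem hj) hv)
          ht
        have hfa : f a ≠ 0 := h0 a (Finset.mem_cons_self _ _)
        have hvne : w.v (f a) ≠ w.v (∑ i ∈ t, f i) := by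
          rw [hvi0]
          intro h
          have := hinj a (Finset.mem_cons_self _ _) i0 (Finset.mem_cons_of_mem hi0) h
          exact ha (this ▸ hi0)
        obtain ⟨hne, hmin⟩ := w.v_add_eq_min hfa hT0 hvne
        refine ⟨hne, ?_⟩
        rcases le_or_gt (w.v (f a)) (w.v (∑ i ∈ t, f i)) with h | h
        · exact ⟨a, Finset.mem_cons_self _ _, by rw [hmin, min_eq_left h]⟩
        · exact ⟨i0, Finset.mem_cons_of_mem hi0, by rw [hmin, min_eq_right h.le, hvi0]⟩


end NormDiscVal

open Polynomial

lemma euler_trace {K L : Type*} [Field K] [Field L] [Algebra K L]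
    [FiniteDimensional K L] [Algebra.IsSeparable K L] {x : L}
    (hx : Algebra.adjoin K {x} = ⊤) {r : ℕ} (hr : r < Module.finrank K L) :
    Algebra.trace K L (x ^ r / aeval x (derivative (minpoly K x))) =
      if r = Module.finrank K L - 1 then 1 else 0 := by
  classical
  have hint : IsIntegral K x := Algebra.IsSeparable.isIntegral K x
  have hdegm : (minpoly K x).natDegree = Module.finrank K L := by
    rw [← IntermediateField.adjoin.finrank hint]
    have htop : IntermediateField.adjoin K {x} = ⊤ :=
      IntermediateField.adjoin_eq_top_of_algebra K {x} hx
    rw [htop, IntermediateField.finrank_top']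
  have hmonic : (minpolyDiv K x).Monic := minpolyDiv_monic hint
  have hnd : (minpolyDiv K x).natDegree = Module.finrank K L - 1 := by
    rw [natDegree_minpolyDiv, hdegm]
  set E := AlgebraicClosure K
  apply (algebraMap K E).injective
  have key := congrArg (fun q : E[X] => q.coeff (Module.finrank K L - 1))
    (sum_smul_minpolyDiv_eq_X_pow E hx hr)
  simp only [finset_sum_coeff, coeff_map, coeff_smul, coeff_X_pow, RingHom.coe_coe] at key
  rw [← hnd] at key
  simp only [hmonic.coeff_natDegree, smul_eq_mul, mul_one] at key
  rw [trace_eq_sum_embeddings E, key]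
  rcases eq_or_ne r (Module.finrank K L - 1) with h | h
  · have : (minpolyDiv K x).natDegree = r := by omega
    simp [this, h]
  · have : (minpolyDiv K x).natDegree ≠ r := by omega
    simp [this, h]

lemma trace_algEquiv_apply {K L : Type*} [Field K] [Field L] [Algebra K L]
    [FiniteDimensional K L] [IsGalois K L] (σ : L ≃ₐ[K] L) (x : L) :
    Algebra.trace K L (σ x) = Algebra.trace K L x := by
  apply (algebraMap K L).injective
  rw [trace_eq_sum_automorphisms, trace_eq_sum_automorphisms]
  exact Fintype.sum_equiv (Equiv.mulRight σ) _ _ (fun τ => rfl)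


/-- **Tightness of the valuation criterion.**  With `L/K` a finite Galois,
totally ramified extension of degree `p ^ n` of a complete discretely valued
field of characteristic `p` with perfect residue field, and
`d = v_L(p'(πL))`: for every integer `i` with `i ≢ −d − 1 (mod p ^ n)` there
is an element `ρᵢ ∈ L` of valuation `i` which is not a normal basis
generator, i.e. `K[G]·ρᵢ ⊊ L`. -/
theorem valuation_criterion_tight
    {p : ℕ} (hp : p.Prime) {K L : Type*} [Field K] [Field L] [Algebra K L]
    [CharP K p]
    (vK : NormDiscVal K) (hKcompl : vK.IsComplete)
    (hKres : vK.PerfectResidueCharP p)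
    [FiniteDimensional K L] [IsGalois K L]
    (n : ℕ) (hdeg : Module.finrank K L = p ^ n)
    (vL : NormDiscVal L)
    (htotram : ∀ x : K, x ≠ 0 → vL.v (algebraMap K L x) = (p ^ n : ℤ) * vK.v x)
    (πL : L) (hπL : πL ≠ 0 ∧ vL.v πL = 1)
    (d : ℤ) (hd : d = vL.v (aeval πL (derivative (minpoly K πL)))) :
    ∀ i : ℤ, ¬ Int.ModEq ((p : ℤ) ^ n) i (-d - 1) →
      ∃ ρ : L, ρ ≠ 0 ∧ vL.v ρ = i ∧
        Submodule.span K (Set.range fun σ : L ≃ₐ[K] L => σ ρ) ≠ ⊤ := by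
  classical
  intro i hi
  by_cases hn : n = 0
  · exact absurd (by simp [hn, Int.ModEq, Int.emod_one]) hi
  have hπ0 : πL ≠ 0 := hπL.1
  set P : ℤ := (p : ℤ) ^ n with hPdef
  have hP1 : 1 < P := by
    have : 1 < (p : ℤ) := by exact_mod_cast hp.one_lt
    calc (1:ℤ) < (p:ℤ) := this
    _ ≤ (p:ℤ) ^ n := le_self_pow₀ (by omega) hn
  have hP0 : 0 < P := by omega
  have hPcast : ((p ^ n : ℕ) : ℤ) = P := by push_cast [hPdef]; ring
  have hpn1 : 1 ≤ p ^ n := Nat.one_le_iff_ne_zero.mpr (pow_ne_zero n hp.pos.ne')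
  -- linear independence of powers of πL
  have hli : LinearIndependent K (fun j : Fin (p ^ n) => πL ^ (j : ℕ)) := by
    rw [Fintype.linearIndependent_iff]
    intro g hg
    by_contra hall
    push_neg at hall
    obtain ⟨i₀, hi₀⟩ := hall
    set s : Finset (Fin (p ^ n)) := Finset.univ.filter (fun j => g j ≠ 0) with hs_def
    have hs : s.Nonempty := ⟨i₀, by simp [hs_def, hi₀]⟩
    have hval : ∀ j ∈ s, vL.v (g j • πL ^ (j : ℕ)) = P * vK.v (g j) + (j : ℕ) := by
      intro j hj
      have hgj : g j ≠ 0 := by simpa [hs_def] using hj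
      rw [Algebra.smul_def, vL.v_mul _ _ ((map_ne_zero (algebraMap K L)).mpr hgj)
        (pow_ne_zero _ hπ0), htotram _ hgj, vL.v_pow_eq hπ0, hπL.2]
      ring
    have h0 : ∀ j ∈ s, g j • πL ^ (j : ℕ) ≠ 0 := by
      intro j hj
      have hgj : g j ≠ 0 := by simpa [hs_def] using hj
      exact smul_ne_zero hgj (pow_ne_zero _ hπ0)
    have hinj : ∀ j ∈ s, ∀ j' ∈ s,
        vL.v (g j • πL ^ (j : ℕ)) = vL.v (g j' • πL ^ (j' : ℕ)) → j = j' := by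
      intro j hj j' hj' hv
      rw [hval j hj, hval j' hj'] at hv
      have hjlt : ((j : ℕ) : ℤ) < P := by rw [← hPcast]; exact_mod_cast j.2
      have hjlt' : ((j' : ℕ) : ℤ) < P := by rw [← hPcast]; exact_mod_cast j'.2
      have h1 : (P * vK.v (g j) + (j : ℕ)) % P = ((j : ℕ) : ℤ) := by
        rw [add_comm, Int.add_mul_emod_self_left]
        exact Int.emod_eq_of_lt (by positivity) hjlt
      have h2 : (P * vK.v (g j') + (j' : ℕ)) % P = ((j' : ℕ) : ℤ) := by
        rw [add_comm, Int.add_mul_emod_self_left]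
        exact Int.emod_eq_of_lt (by positivity) hjlt'
      have : ((j : ℕ) : ℤ) = ((j' : ℕ) : ℤ) := by rw [← h1, ← h2, hv]
      exact Fin.ext (by exact_mod_cast this)
    have hsum : ∑ j ∈ s, g j • πL ^ (j : ℕ) = 0 := by
      rw [hs_def, Finset.sum_filter_of_ne (fun x _ hx => by
        intro hgx; exact hx (by rw [hgx, zero_smul]))]
      exact hg
    exact (vL.v_sum s _ h0 hinj hs).1 hsum
  have hcard : Fintype.card (Fin (p ^ n)) = Module.finrank K L := by
    simp [hdeg]
  have hnefin : Nonempty (Fin (p ^ n)) := ⟨⟨0, by omega⟩⟩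
  have hspan : Submodule.span K (Set.range fun j : Fin (p ^ n) => πL ^ (j : ℕ)) = ⊤ := by
    rw [← coe_basisOfLinearIndependentOfCardEqFinrank hli hcard]
    exact (basisOfLinearIndependentOfCardEqFinrank hli hcard).span_eq
  have hadj : Algebra.adjoin K {πL} = ⊤ := by
    rw [← Algebra.toSubmodule_eq_top, eq_top_iff, ← hspan, Submodule.span_le]
    rintro _ ⟨j, rfl⟩
    have h1 : πL ∈ Algebra.adjoin K {πL} := Algebra.subset_adjoin (Set.mem_singleton _)
    have hmem : πL ^ (j : ℕ) ∈ Algebra.adjoin K {πL} := pow_mem h1 _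
    simpa using hmem
  -- the derivative value
  set D : L := aeval πL (derivative (minpoly K πL)) with hDdef
  have hD0 : D ≠ 0 := by
    obtain ⟨a, b, hab⟩ := Algebra.IsSeparable.isSeparable K πL
    intro h
    have := congrArg (aeval πL) hab
    simp only [map_add, map_mul, minpoly.aeval, mul_zero, zero_add, map_one] at this
    rw [← hDdef, h, mul_zero] at this
    exact zero_ne_one this
  -- arithmetic choice of k and m
  obtain ⟨πK, hπK0, hπK1⟩ := vK.exists_uniformizer
  set r : ℤ := (i + d) % P with hrdef
  set q : ℤ := (i + d) / P with hqdef
  have hqr : P * q + r = i + d := Int.mul_ediv_add_emod (i + d) P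
  have hr0 : 0 ≤ r := Int.emod_nonneg _ hP0.ne'
  have hrP : r < P := Int.emod_lt_of_pos _ hP0
  have hrne : r ≠ P - 1 := by
    intro h
    exact hi (Int.modEq_iff_dvd.mpr ⟨-(q + 1), by rw [h] at hqr; linarith⟩)
  set k : ℕ := r.toNat with hkdef
  have hkr : (k : ℤ) = r := Int.toNat_of_nonneg hr0
  have hklt : k < p ^ n := by
    have : (k : ℤ) < ((p ^ n : ℕ) : ℤ) := by rw [hkr, hPcast]; exact hrP
    exact_mod_cast this
  have hkne : k ≠ p ^ n - 1 := by
    intro h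
    apply hrne
    rw [← hkr, h]
    push_cast [hpn1]
    rw [hPdef]
  -- the element ρ
  set ρ : L := algebraMap K L (πK ^ q) * (πL ^ k / D) with hρdef
  have hπKq0 : πK ^ q ≠ 0 := zpow_ne_zero _ hπK0
  have hA0 : algebraMap K L (πK ^ q) ≠ 0 := (map_ne_zero (algebraMap K L)).mpr hπKq0
  have hB0 : πL ^ k / D ≠ 0 := div_ne_zero (pow_ne_zero _ hπ0) hD0
  have hρ0 : ρ ≠ 0 := mul_ne_zero hA0 hB0
  have hvρ : vL.v ρ = i := by
    rw [hρdef, vL.v_mul _ _ hA0 hB0, htotram _ hπKq0, vK.v_zpow_eq hπK0, hπK1,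
      div_eq_mul_inv, vL.v_mul _ _ (pow_ne_zero _ hπ0) (inv_ne_zero hD0),
      vL.v_pow_eq hπ0, hπL.2, vL.v_inv_eq hD0, ← hd, hkr]
    linarith [hqr]
  -- trace of ρ is zero
  have htr : Algebra.trace K L ρ = 0 := by
    rw [hρdef, ← Algebra.smul_def, map_smul, euler_trace hadj (hdeg ▸ hklt)]
    rw [hdeg, if_neg hkne, smul_zero]
  refine ⟨ρ, hρ0, hvρ, ?_⟩
  intro htop
  have hker : Submodule.span K (Set.range fun σ : L ≃ₐ[K] L => σ ρ) ≤
      LinearMap.ker (Algebra.trace K L) := by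
    rw [Submodule.span_le]
    rintro _ ⟨σ, rfl⟩
    simp [LinearMap.mem_ker, trace_algEquiv_apply, htr]
  have hz : Algebra.trace K L (πL ^ (p ^ n - 1) / D) = 0 := by
    have : (πL ^ (p ^ n - 1) / D) ∈ LinearMap.ker (Algebra.trace K L) := by
      apply hker; rw [htop]; trivial
    exact LinearMap.mem_ker.mp this
  rw [euler_trace hadj (by omega : p ^ n - 1 < Module.finrank K L)] at hz
  rw [hdeg] at hz
  simp at hz
end

section
/- Let K be a field of characteristic p > 0 and let L/K be a finite Galois extension whose Galois group G is a p-group. If ρ ∈ L satisfies Tr_{L/K}(ρ) ≠ 0, then ρ is a normal basis generator of L/K: K[G]·ρ = L. (Consequently, in characteristic p with G a p-group, ρ generates a normal basis if and only if Tr_{L/K}(ρ) ≠ 0.) -/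
/-!
If the span `V` of the Galois orbit of `x` were proper, its orthogonal for the nondegenerate
trace form would be a nonzero Galois-stable subspace. A `p`-group acting additively on a nonzero
`𝔽_p`-vector space fixes a nonzero vector: the `𝔽_p`-span of an orbit is a finite `G`-set of
order divisible by `p` with the fixed point `0`, so it has a second fixed point. A nonzero fixed
vector is some `k ∈ Kˣ`, and `k ⊥ x` says `k * Tr x = 0`. Conversely, the trace is Galois
invariant, so if `Tr x = 0` it vanishes on `V`, which therefore is not all of `L`.
-/

theorem smul_mem_span_orbit {G R M : Type*} [Monoid G] [Semiring R] [AddCommMonoid M]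
    [Module R M] [DistribMulAction G M] [SMulCommClass G R M] (g : G) (c : M) {y : M}
    (hy : y ∈ Submodule.span R (Set.range fun h : G => h • c)) :
    g • y ∈ Submodule.span R (Set.range fun h : G => h • c) := by
  refine Submodule.span_induction ?_ (by simp)
    (fun _ _ _ _ h₁ h₂ => by rw [smul_add]; exact add_mem h₁ h₂)
    (fun a _ _ h => by rw [smul_comm]; exact Submodule.smul_mem _ a h) hy
  rintro _ ⟨h, rfl⟩
  exact Submodule.subset_span ⟨g * h, mul_smul g h c⟩

theorem IsPGroup.exists_mem_fixedPoints_ne_zero {p : ℕ} [Fact p.Prime] {G M S : Type*}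
    [Group G] [Finite G] (hG : IsPGroup p G) [AddCommGroup M] [DistribMulAction G M]
    [Module (ZMod p) M] [SetLike S M] [AddSubgroupClass S M] {H : S}
    (hH : ∀ g : G, ∀ x ∈ H, g • x ∈ H) {c : M} (hcH : c ∈ H) (hc : c ≠ 0) :
    ∃ d ∈ H, d ≠ 0 ∧ d ∈ MulAction.fixedPoints G M := by
  have : SMulCommClass G (ZMod p) M :=
    ⟨fun g a y => ZMod.map_smul (DistribSMul.toAddMonoidHom M g) a y⟩
  let O : Submodule (ZMod p) M := Submodule.span (ZMod p) (Set.range fun g : G => g • c)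
  have hO_le : ∀ x : M, x ∈ O → x ∈ H := fun x hx => by
    refine Submodule.span_induction ?_ (zero_mem H) (fun _ _ _ _ => add_mem)
      (fun a _ _ hy => ZMod.smul_mem hy a) hx
    rintro _ ⟨g, rfl⟩
    exact hH g c hcH
  let T : SubMulAction G M := ⟨O, fun g _ => smul_mem_span_orbit g c⟩
  have : Module.Finite (ZMod p) O :=
    FiniteDimensional.span_of_finite (ZMod p) (Set.finite_range _)
  have : Finite T := Module.finite_of_finite (ZMod p) (M := O)
  have hcO : c ∈ O := Submodule.subset_span ⟨1, one_smul G c⟩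
  have : Nontrivial O := ⟨⟨⟨c, hcO⟩, 0, by simpa [Subtype.ext_iff] using hc⟩⟩
  have hcard : p ∣ Nat.card T := by
    change p ∣ Nat.card O
    rw [Module.natCard_eq_pow_finrank (K := ZMod p), Nat.card_zmod]
    exact dvd_pow_self p Module.finrank_pos.ne'
  obtain ⟨d, hd, hd0⟩ := hG.exists_fixed_point_of_prime_dvd_card_of_fixed_point T hcard
    (a := ⟨0, O.zero_mem⟩) fun g => Subtype.ext (smul_zero g)
  exact ⟨d, hO_le d d.2, fun h => hd0 (Subtype.ext h.symm),
    fun g => congrArg Subtype.val (hd g)⟩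

section Trace

variable {K L : Type*} [Field K] [Field L] [Algebra K L]

theorem apply_mem_traceForm_orthogonal {V : Submodule K L}
    (hV : ∀ σ : L ≃ₐ[K] L, ∀ v ∈ V, σ v ∈ V) (σ : L ≃ₐ[K] L) {y : L}
    (hy : y ∈ (Algebra.traceForm K L).orthogonal V) :
    σ y ∈ (Algebra.traceForm K L).orthogonal V := by
  intro v hv
  have h := hy (σ.symm v) (hV σ.symm v hv)
  simp only [Algebra.traceForm_apply] at h ⊢
  rw [← σ.apply_symm_apply v, ← map_mul, Algebra.trace_eq_of_algEquiv, h]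

theorem traceForm_orthogonal_ne_bot [FiniteDimensional K L] [Algebra.IsSeparable K L]
    {V : Submodule K L} (hV : V ≠ ⊤) : (Algebra.traceForm K L).orthogonal V ≠ ⊥ := by
  intro h
  apply hV
  rw [← LinearMap.BilinForm.orthogonal_orthogonal (traceForm_nondegenerate K L)
    (Algebra.traceForm_isSymm K).isRefl V, h, LinearMap.BilinForm.orthogonal_bot]

theorem span_orbit_eq_top_of_trace_ne_zero {p : ℕ} [Fact p.Prime] [CharP K p]
    [FiniteDimensional K L] [IsGalois K L] (hG : IsPGroup p (L ≃ₐ[K] L)) {x : L}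
    (hx : Algebra.trace K L x ≠ 0) :
    Submodule.span K (Set.range fun σ : L ≃ₐ[K] L => σ x) = ⊤ := by
  by_contra hV
  obtain ⟨c, hcW, hc⟩ := Submodule.exists_mem_ne_zero_of_ne_bot (traceForm_orthogonal_ne_bot hV)
  have : CharP L p := charP_of_injective_algebraMap (algebraMap K L).injective p
  let _ : Module (ZMod p) L := (ZMod.algebra L p).toModule
  obtain ⟨d, hdW, hd, hdfix⟩ := hG.exists_mem_fixedPoints_ne_zero
    (fun σ _ => apply_mem_traceForm_orthogonal (fun τ _ => smul_mem_span_orbit τ x) σ) hcW hc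
  obtain ⟨k, rfl⟩ := (IsGalois.mem_range_algebraMap_iff_fixed d).mpr hdfix
  have h := hdW x (Submodule.subset_span ⟨1, rfl⟩)
  simp only [Algebra.traceForm_apply, mul_comm x, ← Algebra.smul_def, map_smul,
    smul_eq_mul] at h
  exact hx ((mul_eq_zero.mp h).resolve_left (by rintro rfl; simp at hd))

theorem trace_ne_zero_of_span_orbit_eq_top [FiniteDimensional K L] [Algebra.IsSeparable K L]
    {x : L} (hx : Submodule.span K (Set.range fun σ : L ≃ₐ[K] L => σ x) = ⊤) :
    Algebra.trace K L x ≠ 0 := by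
  intro h
  apply Algebra.trace_ne_zero K L
  rw [← LinearMap.ker_eq_top, eq_top_iff, ← hx, Submodule.span_le]
  rintro _ ⟨σ, rfl⟩
  rw [SetLike.mem_coe, LinearMap.mem_ker, Algebra.trace_eq_of_algEquiv, h]

end Trace

/-- **Normal basis generators via the trace in characteristic `p`.**  Let `K`
be a field of characteristic `p > 0` and `L/K` a finite Galois extension
whose Galois group is a `p`-group.  If `Tr_{L/K}(ρ) ≠ 0` then `ρ` is a normal
basis generator: `K[G] · ρ = L`.  Consequently `ρ` generates a normal basis
if and only if `Tr_{L/K}(ρ) ≠ 0`. -/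
theorem normal_basis_generator_of_trace_ne_zero
    {p : ℕ} (hp : p.Prime) {K L : Type*} [Field K] [Field L] [Algebra K L]
    [CharP K p] [FiniteDimensional K L] [IsGalois K L]
    (hpgroup : ∃ n : ℕ, Nat.card (L ≃ₐ[K] L) = p ^ n)
    (ρ : L) (hρ : Algebra.trace K L ρ ≠ 0) :
    Submodule.span K (Set.range fun σ : L ≃ₐ[K] L => σ ρ) = ⊤ ∧
      ∀ x : L,
        Submodule.span K (Set.range fun σ : L ≃ₐ[K] L => σ x) = ⊤ ↔
          Algebra.trace K L x ≠ 0 := by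
  have : Fact p.Prime := ⟨hp⟩
  obtain ⟨n, hn⟩ := hpgroup
  have hG : IsPGroup p (L ≃ₐ[K] L) := IsPGroup.of_card hn
  exact ⟨span_orbit_eq_top_of_trace_ne_zero hG hρ, fun x =>
    ⟨trace_ne_zero_of_span_orbit_eq_top, span_orbit_eq_top_of_trace_ne_zero hG⟩⟩
end
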